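/- arXiv:2111.13101 — 2 statements merged into one kernel-verified Lean document; each statement's English description precedes it below -/
import Mathlib

section
/- For every real α with 0 < α < 1, there exists a real β with 0 < β ≤ 1 − α such that g(β) > (2/3)(1−α)⁴ + (8/3)α(1−α)³, where g(β) = αβ² − αβ³ − (5/2)β² + (7/3)β³ + 4αβ + 2/3 − 4α² − 8α²β + 4α³β + (3/2)α²β² + (16/3)α³ − 2α⁴ − (1/2)β⁴. -/
/-! The difference `g β - ((2/3)(1-α)⁴ + (8/3)α(1-α)³)` vanishes at `β = 0` and factors as
`β · s(α, β)` with `s(α, 0) = 4α(1-α)²`. For `α, β ∈ [0, 1]` the higher-order terms of `s` cost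
at most `(5/2)β`, so `β = α(1-α)²` (which is `≤ 1 - α`) leaves `s ≥ (3/2)α(1-α)² > 0`.
Here `s` is `quartetGapSlope`. -/

noncomputable def quartetGapSlope (α β : ℝ) : ℝ :=
  4 * α * (1 - α)^2 - (3 * α + 5) * (1 - α) / 2 * β + (7/3 - α) * β^2 - β^3 / 2

lemma quartetGap_eq_mul_slope (α β : ℝ) :
    (α * β^2 - α * β^3 - (5/2) * β^2 + (7/3) * β^3 + 4 * α * β
        + 2/3 - 4 * α^2 - 8 * α^2 * β + 4 * α^3 * β + (3/2) * α^2 * β^2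
        + (16/3) * α^3 - 2 * α^4 - (1/2) * β^4)
      - ((2/3) * (1 - α)^4 + (8/3) * α * (1 - α)^3) = β * quartetGapSlope α β := by
  unfold quartetGapSlope
  ring

lemma quartetGapSlope_ge {α β : ℝ} (h0 : 0 ≤ α) (h1 : α ≤ 1) (hβ0 : 0 ≤ β) (hβ1 : β ≤ 1) :
    4 * α * (1 - α)^2 - (5/2) * β ≤ quartetGapSlope α β := by
  have hlin : (3 * α + 5) * (1 - α) / 2 * β ≤ (5/2) * β :=
    mul_le_mul_of_nonneg_right (by nlinarith) hβ0
  have hcubic : β^3 / 2 ≤ (7/3 - α) * β^2 := by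
    have hsq : 0 ≤ β^2 := sq_nonneg β
    nlinarith [mul_le_mul_of_nonneg_left hβ1 hsq]
  unfold quartetGapSlope
  linarith

theorem stmt13 (α : ℝ) (h0 : 0 < α) (h1 : α < 1) :
    ∃ β : ℝ, 0 < β ∧ β ≤ 1 - α ∧
      α * β^2 - α * β^3 - (5/2) * β^2 + (7/3) * β^3 + 4 * α * β
        + 2/3 - 4 * α^2 - 8 * α^2 * β + 4 * α^3 * β + (3/2) * α^2 * β^2
        + (16/3) * α^3 - 2 * α^4 - (1/2) * β^4
      > (2/3) * (1 - α)^4 + (8/3) * α * (1 - α)^3 := by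
  have hα' : 0 < 1 - α := sub_pos.2 h1
  have hβ0 : 0 < α * (1 - α)^2 := by positivity
  have hβ1 : α * (1 - α)^2 ≤ 1 - α := by
    have : α * (1 - α) ≤ 1 := by nlinarith
    nlinarith
  refine ⟨α * (1 - α)^2, hβ0, hβ1, ?_⟩
  rw [gt_iff_lt, ← sub_pos, quartetGap_eq_mul_slope]
  refine mul_pos hβ0 (lt_of_lt_of_le ?_ (quartetGapSlope_ge h0.le h1.le hβ0.le (by linarith)))
  linarith
end

section
/- Let x₁,…,x₇ be nonnegative reals with x₁+x₂+x₃+x₄+x₅+x₆+x₇ = 1, and for each of the 10 triples {u,v,w} ⊆ {a,b,c,d,e} define r(u,v,w) = p_{uv|w}p_{uw|v} + p_{uv|w}p_{vw|u} + p_{uw|v}p_{vw|u}, where the quantities p are given by: p_{ab|c}=p_{ab|d}=p_{ab|e}=x₃+x₄+x₅+x₆+x₇; p_{cd|a}=p_{cd|b}=p_{cd|e}=x₁+x₂+x₅+x₆+x₇; p_{ae|c}=p_{ae|d}=p_{be|c}=p_{be|d}=x₃+x₄+x₆; p_{ce|a}=p_{ce|b}=p_{de|a}=p_{de|b}=x₁+x₂+x₅;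 p_{bc|a}=p_{bd|a}=p_{be|a}=x₁; p_{ac|b}=p_{ad|b}=p_{ae|b}=x₂; p_{ad|c}=p_{bd|c}=p_{de|c}=x₃; p_{ac|d}=p_{bc|d}=p_{ce|d}=x₄; p_{ac|e}=p_{ad|e}=p_{bc|e}=p_{bd|e}=x₇. Then the sum of r(u,v,w) over all 10 triples is at most 98/33, and this value is attained at x₁=x₂=x₃=x₄=7/33, x₅=x₆=0, x₇=5/33. -/
/-!
With `s = x₁ + x₂`, `t = x₃ + x₄` and `y = 1 - x₇`, the abc-type triples contribute
`3 (s (1 - s) + x₁ x₂)`, the cde-type ones `3 (t (1 - t) + x₃ x₄)` and the remaining four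
`4 (x₇ y + R U)` with `R + U = y`. AM-GM on the three products leaves
`3 φ(s) + 3 φ(t) + 4 x₇ y + y²` with `φ(s) = s - 3s²/4`; concavity gives
`φ(s) + φ(t) ≤ 2 φ((s + t)/2)`, which increases in `s + t ≤ y`. The result is
`7y - 33y²/8`, maximal at `y = 28/33`, i.e. `x₇ = 5/33`, with `x₅ = x₆ = 0` and all of
`x₁, …, x₄` equal.
-/

/-- The sum of r(u,v,w) over the 10 triples of {a,b,c,d,e} for the quintet tree,
expressed in terms of the edge fractions x₁,…,x₇. -/
def quintetSum (x₁ x₂ x₃ x₄ x₅ x₆ x₇ : ℝ) : ℝ :=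
  let P := x₃ + x₄ + x₅ + x₆ + x₇   -- p_{ab|c} = p_{ab|d} = p_{ab|e}
  let Q := x₁ + x₂ + x₅ + x₆ + x₇   -- p_{cd|a} = p_{cd|b} = p_{cd|e}
  let R := x₃ + x₄ + x₆             -- p_{ae|c} = p_{ae|d} = p_{be|c} = p_{be|d}
  let U := x₁ + x₂ + x₅             -- p_{ce|a} = p_{ce|b} = p_{de|a} = p_{de|b}
  -- triples abc, abd, abe
  (P * x₂ + P * x₁ + x₂ * x₁) + (P * x₂ + P * x₁ + x₂ * x₁) + (P * x₂ + P * x₁ + x₂ * x₁)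
  -- triples acd, bcd, cde
  + (x₄ * x₃ + x₄ * Q + x₃ * Q) + (x₄ * x₃ + x₄ * Q + x₃ * Q) + (x₄ * x₃ + x₄ * Q + x₃ * Q)
  -- triples ace, ade, bce, bde
  + (x₇ * R + x₇ * U + R * U) + (x₇ * R + x₇ * U + R * U)
  + (x₇ * R + x₇ * U + R * U) + (x₇ * R + x₇ * U + R * U)

lemma quintetSum_eq_of_sum_eq_one {x₁ x₂ x₃ x₄ x₅ x₆ x₇ : ℝ}
    (hsum : x₁ + x₂ + x₃ + x₄ + x₅ + x₆ + x₇ = 1) :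
    quintetSum x₁ x₂ x₃ x₄ x₅ x₆ x₇ =
      3 * ((x₁ + x₂) * (1 - (x₁ + x₂)) + x₁ * x₂)
      + 3 * ((x₃ + x₄) * (1 - (x₃ + x₄)) + x₃ * x₄)
      + 4 * (x₇ * (1 - x₇) + (x₃ + x₄ + x₆) * (x₁ + x₂ + x₅)) := by
  simp only [quintetSum]
  linear_combination (3 * (x₁ + x₂) + 3 * (x₃ + x₄) + 4 * x₇) * hsum

lemma mul_le_sq_add_div_four (a b : ℝ) : a * b ≤ (a + b) ^ 2 / 4 := by
  nlinarith [four_mul_le_sq_add a b]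

lemma quintetSum_le {x₁ x₂ x₃ x₄ x₅ x₆ x₇ : ℝ} (h₅ : 0 ≤ x₅) (h₆ : 0 ≤ x₆) (h₇ : 0 ≤ x₇)
    (hsum : x₁ + x₂ + x₃ + x₄ + x₅ + x₆ + x₇ = 1) :
    quintetSum x₁ x₂ x₃ x₄ x₅ x₆ x₇ ≤ 7 * (1 - x₇) - 33 / 8 * (1 - x₇) ^ 2 := by
  rw [quintetSum_eq_of_sum_eq_one hsum]
  have hA := mul_le_sq_add_div_four x₁ x₂
  have hB := mul_le_sq_add_div_four x₃ x₄
  have hC := mul_le_sq_add_div_four (x₃ + x₄ + x₆) (x₁ + x₂ + x₅)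
  rw [show x₃ + x₄ + x₆ + (x₁ + x₂ + x₅) = 1 - x₇ by linarith] at hC
  have hconcave : (x₁ + x₂ + (x₃ + x₄)) ^ 2 ≤ 2 * ((x₁ + x₂) ^ 2 + (x₃ + x₄) ^ 2) := by
    nlinarith [sq_nonneg (x₁ + x₂ - (x₃ + x₄))]
  -- `w ↦ w - 3w²/8` increases on `[0, 4/3]`, and `x₁ + ⋯ + x₄ ≤ 1 - x₇ ≤ 1`
  have hmono : (x₁ + x₂ + (x₃ + x₄)) - 3 / 8 * (x₁ + x₂ + (x₃ + x₄)) ^ 2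
      ≤ (1 - x₇) - 3 / 8 * (1 - x₇) ^ 2 := by
    have hw : 0 ≤ (1 - x₇) - (x₁ + x₂ + (x₃ + x₄)) := by linarith
    have hw' : 0 ≤ 8 / 3 - (1 - x₇) - (x₁ + x₂ + (x₃ + x₄)) := by linarith
    nlinarith [mul_nonneg hw hw']
  linarith

lemma seven_mul_sub_sq_le (y : ℝ) : 7 * y - 33 / 8 * y ^ 2 ≤ 98 / 33 := by
  nlinarith [sq_nonneg (y - 28 / 33)]

theorem stmt16 :
    (∀ x₁ x₂ x₃ x₄ x₅ x₆ x₇ : ℝ,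
      0 ≤ x₁ → 0 ≤ x₂ → 0 ≤ x₃ → 0 ≤ x₄ → 0 ≤ x₅ → 0 ≤ x₆ → 0 ≤ x₇ →
      x₁ + x₂ + x₃ + x₄ + x₅ + x₆ + x₇ = 1 →
      quintetSum x₁ x₂ x₃ x₄ x₅ x₆ x₇ ≤ 98/33) ∧
    quintetSum (7/33) (7/33) (7/33) (7/33) 0 0 (5/33) = 98/33 := by
  refine ⟨fun x₁ x₂ x₃ x₄ x₅ x₆ x₇ _ _ _ _ h₅ h₆ h₇ hsum => ?_, by norm_num [quintetSum]⟩
  exact (quintetSum_le h₅ h₆ h₇ hsum).trans (seven_mul_sub_sq_le _)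
end
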